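/- arXiv:0706.0287 — 5 statements merged into one kernel-verified Lean document; each statement's English description precedes it below -/
import Mathlib

section
/- The following are equivalent: (i) S² is co-inner, i.e. there exists a convolution invertible ω ∈ H* such that S²(h) = ω(h₁)h₂ω⁻¹(h₃) for all h ∈ H; (ii) there exist linear maps ρ, τ : H ⊗ H → k such that λ(lh) = ρ(h₁ ⊗ l₁)·λ(h₂l₂)·τ(h₃ ⊗ l₃) for all h, l ∈ H. -/
open TensorProduct Coalgebra HopfAlgebra

variable {k H : Type*} [Field k] [Ring H] [HopfAlgebra k H]

/-- The antipode of `H`, as a linear map. -/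
local notation "𝐒" => HopfAlgebra.antipode (R := k)

/-- Convolution product on the dual of `H`: `(conv f g) h = f h₁ * g h₂`. -/
noncomputable def conv (f g : H →ₗ[k] k) : H →ₗ[k] k :=
  (LinearMap.mul' k k) ∘ₗ (TensorProduct.map f g) ∘ₗ (Coalgebra.comul (R := k))

/-- `h ↦ f h₁ • h₂`. -/
noncomputable def lT (f : H →ₗ[k] k) : H →ₗ[k] H :=
  (TensorProduct.lid k H).toLinearMap ∘ₗ (f.rTensor H) ∘ₗ (Coalgebra.comul (R := k))

/-- The Sweedler sum `h ↦ f h₁ • p h₃ • g h₂`. -/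
noncomputable def sw3 (f : H →ₗ[k] k) (g : H →ₗ[k] H) (p : H →ₗ[k] k) : H →ₗ[k] H :=
  (TensorProduct.lid k H).toLinearMap
    ∘ₗ (TensorProduct.rid k (k ⊗[k] H)).toLinearMap
    ∘ₗ (TensorProduct.map (TensorProduct.map f g) p)
    ∘ₗ ((Coalgebra.comul (R := k)).rTensor H)
    ∘ₗ (Coalgebra.comul (R := k))

/-- `χ(h) = α(h₂) • S⁻²(h₁)`, the generalized Nakayama automorphism. -/
noncomputable def chiMap (Sinv : H →ₗ[k] H) (f : H →ₗ[k] k) : H →ₗ[k] H :=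
  (TensorProduct.rid k H).toLinearMap
    ∘ₗ (TensorProduct.map (Sinv ∘ₗ Sinv) f)
    ∘ₗ (Coalgebra.comul (R := k))

/-- `f(R¹) • R²` for `R = R¹ ⊗ R² ∈ H ⊗ H`. -/
noncomputable def lap (f : H →ₗ[k] k) : (H ⊗[k] H) →ₗ[k] H :=
  (TensorProduct.lid k H).toLinearMap ∘ₗ (f.rTensor H)

/-- `f(R²) • R¹` for `R = R¹ ⊗ R² ∈ H ⊗ H`. -/
noncomputable def rap (f : H →ₗ[k] k) : (H ⊗[k] H) →ₗ[k] H :=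
  (TensorProduct.rid k H).toLinearMap ∘ₗ (LinearMap.lTensor H f)

/-- The Drinfeld element `u = S(R²)R¹`. -/
noncomputable def uElt (Rm : H ⊗[k] H) : H :=
  (LinearMap.mul' k H)
    ((TensorProduct.comm k H H)
      ((LinearMap.lTensor H (HopfAlgebra.antipode (R := k))) Rm))

/-- Convolution product on the dual of `H ⊗ H`. -/
noncomputable def conv2 (f g : (H ⊗[k] H) →ₗ[k] k) : (H ⊗[k] H) →ₗ[k] k :=
  (LinearMap.mul' k k) ∘ₗ (TensorProduct.map f g) ∘ₗ (Coalgebra.comul (R := k) (A := H ⊗[k] H))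

/-- `(h ⊗ l) ↦ σ(h₂ ⊗ l₂) • (l₁ * h₁)`. -/
noncomputable def ac1 (σ : (H ⊗[k] H) →ₗ[k] k) : (H ⊗[k] H) →ₗ[k] H :=
  (TensorProduct.rid k H).toLinearMap
    ∘ₗ (TensorProduct.map ((LinearMap.mul' k H) ∘ₗ (TensorProduct.comm k H H).toLinearMap) σ)
    ∘ₗ (TensorProduct.tensorTensorTensorComm k H H H H).toLinearMap
    ∘ₗ (TensorProduct.map (Coalgebra.comul (R := k)) (Coalgebra.comul (R := k)))

/-- `(h ⊗ l) ↦ σ(h₁ ⊗ l₁) • (h₂ * l₂)`. -/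
noncomputable def ac2 (σ : (H ⊗[k] H) →ₗ[k] k) : (H ⊗[k] H) →ₗ[k] H :=
  (TensorProduct.lid k H).toLinearMap
    ∘ₗ (TensorProduct.map σ (LinearMap.mul' k H))
    ∘ₗ (TensorProduct.tensorTensorTensorComm k H H H H).toLinearMap
    ∘ₗ (TensorProduct.map (Coalgebra.comul (R := k)) (Coalgebra.comul (R := k)))

/-- `(h ⊗ l) ↦ ρ(h₁ ⊗ l₁) * lam(h₂ * l₂) * τ(h₃ ⊗ l₃)`. -/
noncomputable def trip (lam : H →ₗ[k] k) (ρ τ : (H ⊗[k] H) →ₗ[k] k) : (H ⊗[k] H) →ₗ[k] k :=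
  (LinearMap.mul' k k)
    ∘ₗ ((LinearMap.mul' k k).rTensor k)
    ∘ₗ (TensorProduct.map (TensorProduct.map ρ (lam ∘ₗ (LinearMap.mul' k H))) τ)
    ∘ₗ ((TensorProduct.tensorTensorTensorComm k H H H H).toLinearMap.rTensor (H ⊗[k] H))
    ∘ₗ (TensorProduct.tensorTensorTensorComm k (H ⊗[k] H) H (H ⊗[k] H) H).toLinearMap
    ∘ₗ (TensorProduct.map
          (((Coalgebra.comul (R := k)).rTensor H) ∘ₗ (Coalgebra.comul (R := k)))
          (((Coalgebra.comul (R := k)).rTensor H) ∘ₗ (Coalgebra.comul (R := k))))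

/-- `u(h) = σ(h₂ ⊗ S h₁)`. -/
noncomputable def uF (σ : (H ⊗[k] H) →ₗ[k] k) : H →ₗ[k] k :=
  σ ∘ₗ (TensorProduct.comm k H H).toLinearMap
    ∘ₗ ((HopfAlgebra.antipode (R := k)).rTensor H) ∘ₗ (Coalgebra.comul (R := k))

/-- `v(h) = σ(h₁ ⊗ S h₂)`. -/
noncomputable def vF (σ : (H ⊗[k] H) →ₗ[k] k) : H →ₗ[k] k :=
  σ ∘ₗ (LinearMap.lTensor H (HopfAlgebra.antipode (R := k))) ∘ₗ (Coalgebra.comul (R := k))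

/-- `u⁻¹(h) = σ(S²(h₂) ⊗ h₁)`. -/
noncomputable def uinvF (σ : (H ⊗[k] H) →ₗ[k] k) : H →ₗ[k] k :=
  σ ∘ₗ (((HopfAlgebra.antipode (R := k)) ∘ₗ (HopfAlgebra.antipode (R := k))).rTensor H)
    ∘ₗ (TensorProduct.comm k H H).toLinearMap ∘ₗ (Coalgebra.comul (R := k))

/-- `v⁻¹(h) = σ(S²(h₁) ⊗ h₂)`. -/
noncomputable def vinvF (σ : (H ⊗[k] H) →ₗ[k] k) : H →ₗ[k] k :=
  σ ∘ₗ (((HopfAlgebra.antipode (R := k)) ∘ₗ (HopfAlgebra.antipode (R := k))).rTensor H)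
    ∘ₗ (Coalgebra.comul (R := k))


/-!
Put `Λ(h ⊗ l) = λ(hl)`; condition (ii) says that `h ⊗ l ↦ λ(lh)` equals `ρ * Λ * τ` in the
convolution algebra `(H ⊗ H)*`. The left integral identity `l₁ λ(x l₂) = S(x₁) λ(x₂ l)` and the
modular identity `λ(x l₁) l₂ = λ(x₁ l) S⁻¹(x₂) S(a)` move the `l`-legs of `ρ` and `τ` onto `h`,
giving `(ρ * Λ * τ)(h ⊗ l) = λ(v(h₁) h₂ θ(h₃) l)` with `v = vF ρ` and `θ = thetaF τ S⁻¹ S(a)`.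
Since `λ(lh) = λ(χ(h) l)` and `λ` is nondegenerate, (ii) forces `χ(h) = v(h₁) h₂ θ(h₃)`, and as
`χ(h) = α(h₂) S⁻²(h₁)` this makes `S⁻²`, hence `S²`, co-inner; the one-sided convolution inverse
of `v` produced this way is two-sided because `S²` is bijective. Conversely, if `S²` is co-inner
by `ω`, then `ρ = ω⁻¹ ⊗ ε` and `τ = (ω * α) ⊗ ε` work.
-/

open WithConv

section Convolution

variable (f g e : H →ₗ[k] k)

lemma conv_eq_ofConv : conv f g = (toConv f * toConv g).ofConv := rfl

lemma toConv_counit : toConv (counit : H →ₗ[k] k) = 1 := by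
  ext x; simp

lemma conv_counit : conv f counit = f := by
  rw [conv_eq_ofConv, toConv_counit, mul_one]

lemma counit_conv : conv counit f = f := by
  rw [conv_eq_ofConv, toConv_counit, one_mul]

lemma conv_assoc : conv (conv f g) e = conv f (conv g e) := by
  simp only [conv_eq_ofConv, toConv_ofConv, mul_assoc]

lemma conv_algHom_comp_antipode (α : H →ₐ[k] k) :
    conv α.toLinearMap (α.toLinearMap ∘ₗ 𝐒) = counit := by
  ext x
  simp [conv_eq_ofConv, (ℛ k x).convMul_apply, ← map_mul, ← map_sum,
    sum_mul_antipode_eq_algebraMap_counit]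

end Convolution

/-- `h ↦ f h₂ • h₁`. -/
noncomputable def rT (f : H →ₗ[k] k) : H →ₗ[k] H :=
  (TensorProduct.rid k H).toLinearMap ∘ₗ f.lTensor H ∘ₗ comul

section HitActions

variable (f g φ : H →ₗ[k] k)

lemma lT_eq_sum {x : H} {ι : Type*} (𝓡 : Repr k x ι) :
    lT f x = ∑ i ∈ 𝓡.index, f (𝓡.left i) • 𝓡.right i := by
  simp [lT, ← 𝓡.eq]

lemma rT_eq_sum {x : H} {ι : Type*} (𝓡 : Repr k x ι) :
    rT f x = ∑ i ∈ 𝓡.index, f (𝓡.right i) • 𝓡.left i := by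
  simp [rT, ← 𝓡.eq]

lemma comp_lT : φ ∘ₗ lT f = conv f φ := by
  ext x; simp [lT_eq_sum _ (ℛ k x), (ℛ k x).convMul_apply, conv_eq_ofConv]

lemma comp_rT : φ ∘ₗ rT g = conv φ g := by
  ext x; simp [rT_eq_sum _ (ℛ k x), (ℛ k x).convMul_apply, conv_eq_ofConv, mul_comm]

lemma comul_comp_lT : comul ∘ₗ lT f = (lT f).rTensor H ∘ₗ comul := by
  ext x
  have := congr(((TensorProduct.lid k (H ⊗[k] H)).toLinearMap ∘ₗ f.rTensor (H ⊗[k] H))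
    $(sum_tmul_tmul_eq (ℛ k x) (fun i => ℛ k ((ℛ k x).left i)) (fun i => ℛ k ((ℛ k x).right i))))
  simp only [LinearMap.coe_comp, LinearEquiv.coe_coe, Function.comp_apply, map_sum,
    LinearMap.rTensor_tmul, TensorProduct.lid_tmul] at this
  simp only [LinearMap.coe_comp, Function.comp_apply, lT_eq_sum _ (ℛ k x), map_sum, map_smul,
    ← (ℛ k x).eq, LinearMap.rTensor_tmul, lT_eq_sum _ (ℛ k ((ℛ k x).left _)),
    TensorProduct.sum_tmul, TensorProduct.smul_tmul', ← (ℛ k ((ℛ k x).right _)).eq,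
    Finset.smul_sum]
  exact this.symm

lemma comul_comp_rT : comul ∘ₗ rT f = (rT f).lTensor H ∘ₗ comul := by
  ext x
  have := congr(((TensorProduct.rid k (H ⊗[k] H)).toLinearMap ∘ₗ f.lTensor (H ⊗[k] H) ∘ₗ
      (TensorProduct.assoc k H H H).symm.toLinearMap)
    $(sum_tmul_tmul_eq (ℛ k x) (fun i => ℛ k ((ℛ k x).left i)) (fun i => ℛ k ((ℛ k x).right i))))
  simp only [LinearMap.coe_comp, LinearEquiv.coe_coe, Function.comp_apply, map_sum,
    LinearMap.lTensor_tmul, TensorProduct.rid_tmul, TensorProduct.assoc_symm_tmul] at this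
  simp only [LinearMap.coe_comp, Function.comp_apply, rT_eq_sum _ (ℛ k x), map_sum, map_smul,
    ← (ℛ k x).eq, LinearMap.lTensor_tmul, rT_eq_sum _ (ℛ k ((ℛ k x).right _)),
    TensorProduct.tmul_sum, TensorProduct.tmul_smul, ← (ℛ k ((ℛ k x).left _)).eq,
    Finset.smul_sum]
  exact this

lemma lT_comp_lT : lT f ∘ₗ lT g = lT (conv g f) := calc
  lT f ∘ₗ lT g = (TensorProduct.lid k H).toLinearMap ∘ₗ f.rTensor H ∘ₗ (comul ∘ₗ lT g) := rfl
  _ = (TensorProduct.lid k H).toLinearMap ∘ₗ (f ∘ₗ lT g).rTensor H ∘ₗ comul := by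
    rw [comul_comp_lT, LinearMap.rTensor_comp]; rfl
  _ = lT (conv g f) := by rw [comp_lT]; rfl

lemma rT_comp_rT : rT f ∘ₗ rT g = rT (conv f g) := calc
  rT f ∘ₗ rT g = (TensorProduct.rid k H).toLinearMap ∘ₗ f.lTensor H ∘ₗ (comul ∘ₗ rT g) := rfl
  _ = (TensorProduct.rid k H).toLinearMap ∘ₗ (f ∘ₗ rT g).lTensor H ∘ₗ comul := by
    rw [comul_comp_rT, LinearMap.lTensor_comp]; rfl
  _ = rT (conv f g) := by rw [comp_rT]; rfl

lemma rT_comp_lT : rT g ∘ₗ lT f = lT f ∘ₗ rT g := by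
  rw [rT, LinearMap.comp_assoc, LinearMap.comp_assoc, comul_comp_lT]
  ext x
  simp [← (ℛ k x).eq]

lemma lT_comp_rT_eq_sw3 : lT f ∘ₗ rT g = sw3 f LinearMap.id g := by
  ext x
  simp [sw3, rT_eq_sum _ (ℛ k x), ← (ℛ k x).eq, lT_eq_sum _ (ℛ k ((ℛ k x).left _)),
    ← (ℛ k ((ℛ k x).left _)).eq, TensorProduct.sum_tmul, Finset.smul_sum, smul_smul, mul_comm]

lemma lT_counit : lT (counit : H →ₗ[k] k) = LinearMap.id := by
  ext x; simp [lT_eq_sum _ (ℛ k x), sum_counit_smul]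

lemma rT_counit : rT (counit : H →ₗ[k] k) = LinearMap.id := by
  ext x; simp [rT]

lemma counit_comp_lT_comp_rT : counit ∘ₗ lT f ∘ₗ rT g = conv f g := by
  rw [← LinearMap.comp_assoc, comp_lT, conv_counit, comp_rT]

variable {f g}

lemma conv_eq_counit_of_surjective (hfg : conv f g = counit)
    (hsurj : Function.Surjective (lT f ∘ₗ rT g)) : conv g f = counit := by
  have hleft : ∀ x, lT g (lT f x) = x := fun x => by
    rw [← LinearMap.comp_apply, lT_comp_lT, hfg, lT_counit, LinearMap.id_apply]
  have hright : lT (conv g f) = LinearMap.id := by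
    rw [← lT_comp_lT]
    ext x
    obtain ⟨y, rfl⟩ := (LinearMap.coe_comp (lT f) (rT g) ▸ hsurj).of_comp x
    simp [hleft]
  rw [← conv_counit (conv g f), ← comp_lT, hright, LinearMap.comp_id]

lemma eq_lT_comp_rT_of_comp_eq_id (hfg : conv f g = counit) {P : H →ₗ[k] H}
    (hP : (lT f ∘ₗ rT g) ∘ₗ P = LinearMap.id) : P = lT g ∘ₗ rT f := by
  have hinv : (lT g ∘ₗ rT f) ∘ₗ (lT f ∘ₗ rT g) = LinearMap.id := calc
    _ = (lT g ∘ₗ lT f) ∘ₗ (rT f ∘ₗ rT g) := by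
      simp only [LinearMap.comp_assoc]
      rw [← LinearMap.comp_assoc (rT g) (lT f) (rT f), rT_comp_lT f f, LinearMap.comp_assoc]
    _ = LinearMap.id := by rw [lT_comp_lT, rT_comp_rT, hfg, lT_counit, rT_counit]; rfl
  rw [← LinearMap.id_comp P, ← hinv, LinearMap.comp_assoc, hP, LinearMap.comp_id]

end HitActions

section Nakayama

variable {Sinv : H →ₗ[k] H}

lemma chiMap_eq_comp_rT (f : H →ₗ[k] k) : chiMap Sinv f = (Sinv ∘ₗ Sinv) ∘ₗ rT f := by
  ext x
  simp [chiMap, rT, ← (ℛ k x).eq]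

lemma counit_comp_chiMap (hr : ∀ h : H, 𝐒 (Sinv h) = h) (f : H →ₗ[k] k) :
    counit ∘ₗ chiMap Sinv f = f := by
  have hε : counit ∘ₗ Sinv = (counit : H →ₗ[k] k) := by
    ext x
    conv_rhs => rw [← hr x]
    simp
  rw [chiMap_eq_comp_rT, ← LinearMap.comp_assoc, ← LinearMap.comp_assoc, hε, hε, comp_rT,
    counit_conv]

end Nakayama

lemma sum_antipodeInv_mul {R A : Type*} [CommSemiring R] [Semiring A] [HopfAlgebra R A]
    {Sinv : A →ₗ[R] A} (hl : ∀ h : A, Sinv (antipode R h) = h)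
    (hr : ∀ h : A, antipode R (Sinv h) = h) {x : A} {ι : Type*} (𝓡 : Repr R x ι) :
    ∑ i ∈ 𝓡.index, Sinv (𝓡.right i) * 𝓡.left i = algebraMap R A (counit x) := by
  refine (show Function.Injective (antipode R : A →ₗ[R] A) from
    fun u v h => by rw [← hl u, h, hl]) ?_
  simp only [map_sum, antipode_mul_antidistrib, hr, sum_antipode_mul_eq_algebraMap_counit,
    Algebra.algebraMap_eq_smul_one, map_smul, antipode_one]

section Integral

variable {lam : H →ₗ[k] k}

lemma rT_integral (hlam : ∀ f : H →ₗ[k] k, conv f lam = f 1 • lam) (x : H) :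
    rT lam x = lam x • (1 : H) :=
  Module.eval_apply_injective k <| LinearMap.ext fun φ => by
    simpa [mul_comm] using congr($(comp_rT lam φ) x).trans congr($(hlam φ) x)

lemma rT_mulLeft_integral (hlam : ∀ f : H →ₗ[k] k, conv f lam = f 1 • lam) (x l : H) :
    rT (lam ∘ₗ LinearMap.mulLeft k x) l = 𝐒 (rT (lam ∘ₗ LinearMap.mulRight k l) x) := by
  let B : H →ₗ[k] H := (TensorProduct.rid k H).toLinearMap ∘ₗ LinearMap.applyₗ (comul l) ∘ₗ
    LinearMap.lTensorHom H ∘ₗ LinearMap.llcomp k H H k lam ∘ₗ LinearMap.mul k H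
  have hB : ∀ c, B c = rT (lam ∘ₗ LinearMap.mulLeft k c) l := fun _ => rfl
  -- `(id * B)(y) = rT lam (y l)`, so `B = S * (id * B) = S * λ(- l)`.
  have hidB : toConv LinearMap.id * toConv B =
      toConv (Algebra.linearMap k H ∘ₗ lam ∘ₗ LinearMap.mulRight k l) := by
    ext y
    have := rT_integral hlam (y * l)
    simp only [rT_eq_sum _ ((ℛ k y).mul (ℛ k l)), Repr.mul_index, Repr.mul_left,
      Repr.mul_right, Finset.sum_product] at this
    simp only [(ℛ k y).convMul_apply, LinearMap.id_apply, hB, rT_eq_sum _ (ℛ k l),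
      Finset.mul_sum, mul_smul_comm, LinearMap.coe_comp, Function.comp_apply,
      LinearMap.mulLeft_apply, LinearMap.mulRight_apply, Algebra.linearMap_apply, this,
      Algebra.algebraMap_eq_smul_one]
  have hS : toConv B =
      toConv 𝐒 * toConv (Algebra.linearMap k H ∘ₗ lam ∘ₗ LinearMap.mulRight k l) := by
    rw [← hidB, ← mul_assoc, LinearMap.antipode_mul_id, one_mul]
  have := LinearMap.congr_fun (congrArg ofConv hS) x
  simp only [hB, (ℛ k x).convMul_apply] at this
  simp [this, rT_eq_sum _ (ℛ k x), Algebra.algebraMap_eq_smul_one]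

variable {a : H} {Sinv : H →ₗ[k] H}

lemma lT_mulLeft_integral (ha : ∀ h : H, lT lam h = lam h • 𝐒 a)
    (hl : ∀ h : H, Sinv (𝐒 h) = h) (hr : ∀ h : H, 𝐒 (Sinv h) = h) (x l : H) :
    lT (lam ∘ₗ LinearMap.mulLeft k x) l = Sinv (lT (lam ∘ₗ LinearMap.mulRight k l) x) * 𝐒 a := by
  let op : H →ₗ[k] Hᵐᵒᵖ := (MulOpposite.opLinearEquiv k).toLinearMap
  let C : H →ₗ[k] H := (TensorProduct.lid k H).toLinearMap ∘ₗ LinearMap.applyₗ (comul l) ∘ₗ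
    LinearMap.rTensorHom H ∘ₗ LinearMap.llcomp k H H k lam ∘ₗ LinearMap.mul k H
  have hC : ∀ c, C c = lT (lam ∘ₗ LinearMap.mulLeft k c) l := fun _ => rfl
  -- The modular identity applied to `y l` reads `y₂ C(y₁) = λ(y l) S(a)`: a convolution in `Hᵐᵒᵖ`,
  -- where `Sinv` is a right inverse of `id`.
  have hCid : toConv (op ∘ₗ C) * toConv op =
      toConv (op ∘ₗ (lam ∘ₗ LinearMap.mulRight k l).smulRight (𝐒 a)) := by
    ext y
    have := ha (y * l)
    simp only [lT_eq_sum _ ((ℛ k y).mul (ℛ k l)), Repr.mul_index, Repr.mul_left,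
      Repr.mul_right, Finset.sum_product] at this
    apply MulOpposite.unop_injective
    simp only [(ℛ k y).convMul_apply, op, hC, lT_eq_sum _ (ℛ k l), LinearMap.coe_comp,
      Function.comp_apply, Finset.unop_sum, MulOpposite.unop_mul, LinearEquiv.coe_coe,
      MulOpposite.coe_opLinearEquiv, MulOpposite.unop_op, Finset.mul_sum, mul_smul_comm,
      LinearMap.mulLeft_apply, LinearMap.mulRight_apply, LinearMap.smulRight_apply]
    rw [← this, Finset.sum_comm]
  have hidSinv : toConv op * toConv (op ∘ₗ Sinv) = 1 := by
    ext y
    apply MulOpposite.unop_injective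
    simp [(ℛ k y).convMul_apply, op, sum_antipodeInv_mul hl hr]
  have hCeq : toConv (op ∘ₗ C) =
      toConv (op ∘ₗ (lam ∘ₗ LinearMap.mulRight k l).smulRight (𝐒 a)) * toConv (op ∘ₗ Sinv) := by
    rw [← hCid, mul_assoc, hidSinv, mul_one]
  have := congr(MulOpposite.unop ($(LinearMap.congr_fun (congrArg ofConv hCeq) x)))
  simp only [op, LinearMap.coe_comp, Function.comp_apply, LinearEquiv.coe_coe,
    MulOpposite.coe_opLinearEquiv, MulOpposite.unop_op, Finset.unop_sum, MulOpposite.unop_mul, hC,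
    LinearMap.smulRight_apply, (ℛ k x).convMul_apply] at this
  simp [this, lT_eq_sum _ (ℛ k x), Finset.sum_mul]

end Integral

noncomputable def tensorCounit (f : H →ₗ[k] k) : H ⊗[k] H →ₗ[k] k :=
  LinearMap.mul' k k ∘ₗ TensorProduct.map f counit

/-- `y ↦ τ(y₂ ⊗ Sinv(y₁) b)`. -/
noncomputable def thetaF (τ : H ⊗[k] H →ₗ[k] k) (Sinv : H →ₗ[k] H) (b : H) : H →ₗ[k] k :=
  τ ∘ₗ (TensorProduct.comm k H H).toLinearMap ∘ₗ (LinearMap.mulRight k b ∘ₗ Sinv).rTensor H ∘ₗ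
    comul

section TensorConvolution

variable (lam : H →ₗ[k] k)

lemma trip_eq_ofConv (ρ τ : H ⊗[k] H →ₗ[k] k) :
    trip lam ρ τ = (toConv ρ * toConv (lam ∘ₗ LinearMap.mul' k H) * toConv τ).ofConv := by
  refine TensorProduct.ext' fun h l => ?_
  rw [((ℛ k h).tmul (ℛ k l)).convMul_apply]
  simp only [trip, LinearMap.coe_comp, Function.comp_apply, TensorProduct.map_tmul,
    ← (ℛ k h).eq, ← (ℛ k l).eq]
  simp only [map_sum, LinearMap.rTensor_tmul, ← (ℛ k ((ℛ k h).left _)).eq,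
    ← (ℛ k ((ℛ k l).left _)).eq, TensorProduct.sum_tmul, TensorProduct.tmul_sum,
    TensorProduct.tensorTensorTensorComm_tmul, LinearEquiv.coe_coe, TensorProduct.map_tmul,
    LinearMap.mul'_apply, Repr.tmul_index, Repr.tmul_left, Repr.tmul_right, Finset.sum_product,
    ((ℛ k _).tmul (ℛ k _)).convMul_apply, Finset.sum_mul]
  rw [Finset.sum_comm]
  refine Finset.sum_congr rfl fun _ _ => ?_
  rw [Finset.sum_comm]
  exact Finset.sum_congr rfl fun _ _ => Finset.sum_comm

variable (f g : H →ₗ[k] k) (Φ : H ⊗[k] H →ₗ[k] k)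

lemma tensorCounit_mul :
    toConv (tensorCounit f) * toConv Φ = toConv (Φ ∘ₗ (lT f).rTensor H) := by
  refine WithConv.ext (TensorProduct.ext' fun h l => ?_)
  have hl : ∀ u, ∑ j ∈ (ℛ k l).index, counit ((ℛ k l).left j) * Φ (u ⊗ₜ (ℛ k l).right j) =
      Φ (u ⊗ₜ l) := fun u => by
    simpa [TensorProduct.tmul_sum, TensorProduct.tmul_smul] using
      congr(Φ (u ⊗ₜ $(sum_counit_smul (ℛ k l))))
  simp [((ℛ k h).tmul (ℛ k l)).convMul_apply, Finset.sum_product, tensorCounit,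
    lT_eq_sum _ (ℛ k h), TensorProduct.sum_tmul, mul_assoc, ← Finset.mul_sum, hl,
    ← TensorProduct.smul_tmul']

lemma mul_tensorCounit :
    toConv Φ * toConv (tensorCounit g) = toConv (Φ ∘ₗ (rT g).rTensor H) := by
  refine WithConv.ext (TensorProduct.ext' fun h l => ?_)
  have hl : ∀ u, ∑ j ∈ (ℛ k l).index, Φ (u ⊗ₜ (ℛ k l).left j) * counit ((ℛ k l).right j) =
      Φ (u ⊗ₜ l) := fun u => by
    have := congr(Φ (u ⊗ₜ TensorProduct.rid k H $(sum_tmul_counit_eq (ℛ k l))))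
    simp only [map_sum, TensorProduct.rid_tmul, TensorProduct.tmul_sum, TensorProduct.tmul_smul,
      map_smul, smul_eq_mul, one_smul] at this
    simpa [mul_comm] using this
  simp only [((ℛ k h).tmul (ℛ k l)).convMul_apply, Finset.sum_product, Repr.tmul_index,
    Repr.tmul_left, Repr.tmul_right, tensorCounit, LinearMap.coe_comp, Function.comp_apply,
    TensorProduct.map_tmul, LinearMap.mul'_apply, mul_left_comm _ (g _), ← Finset.mul_sum, hl,
    LinearMap.rTensor_tmul, rT_eq_sum _ (ℛ k h), TensorProduct.sum_tmul, map_sum,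
    ← TensorProduct.smul_tmul', map_smul, smul_eq_mul]

lemma tensorCounit_mul_mul_tensorCounit :
    toConv (tensorCounit f) * toConv Φ * toConv (tensorCounit g) =
      toConv (Φ ∘ₗ (lT f ∘ₗ rT g).rTensor H) := by
  rw [tensorCounit_mul, mul_tensorCounit, LinearMap.rTensor_comp, LinearMap.comp_assoc]

lemma trip_tensorCounit : trip lam (tensorCounit f) (tensorCounit g) =
    lam ∘ₗ LinearMap.mul' k H ∘ₗ (lT f ∘ₗ rT g).rTensor H := by
  rw [trip_eq_ofConv, tensorCounit_mul_mul_tensorCounit]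
  rfl

end TensorConvolution

section Factorization

variable {lam : H →ₗ[k] k}

lemma mul_integral_eq_tensorCounit_mul (hlam : ∀ f : H →ₗ[k] k, conv f lam = f 1 • lam)
    (σ : H ⊗[k] H →ₗ[k] k) :
    toConv σ * toConv (lam ∘ₗ LinearMap.mul' k H) =
      toConv (tensorCounit (vF σ)) * toConv (lam ∘ₗ LinearMap.mul' k H) := by
  rw [tensorCounit_mul]
  refine WithConv.ext (TensorProduct.ext' fun h l => ?_)
  have hv : vF σ ∘ₗ rT (lam ∘ₗ LinearMap.mulRight k l) =
      σ ∘ₗ (𝐒 ∘ₗ rT (lam ∘ₗ LinearMap.mulRight k l)).lTensor H ∘ₗ comul := by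
    rw [vF, LinearMap.comp_assoc, LinearMap.comp_assoc, comul_comp_rT, LinearMap.lTensor_comp]
    rfl
  calc (toConv σ * toConv (lam ∘ₗ LinearMap.mul' k H)).ofConv (h ⊗ₜ l)
      = ∑ i ∈ (ℛ k h).index,
          σ ((ℛ k h).left i ⊗ₜ rT (lam ∘ₗ LinearMap.mulLeft k ((ℛ k h).right i)) l) := by
        simp [((ℛ k h).tmul (ℛ k l)).convMul_apply, Finset.sum_product, rT_eq_sum _ (ℛ k l),
          TensorProduct.tmul_sum, TensorProduct.tmul_smul, mul_comm]
    _ = (σ ∘ₗ (𝐒 ∘ₗ rT (lam ∘ₗ LinearMap.mulRight k l)).lTensor H ∘ₗ comul) h := by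
        simp [rT_mulLeft_integral hlam, ← (ℛ k h).eq]
    _ = conv (vF σ) (lam ∘ₗ LinearMap.mulRight k l) h := by rw [← hv, ← comp_rT]
    _ = (lam ∘ₗ LinearMap.mul' k H ∘ₗ (lT (vF σ)).rTensor H) (h ⊗ₜ l) := by
        rw [← comp_lT]; rfl

lemma integral_mul_eq_mul_tensorCounit {a : H} {Sinv : H →ₗ[k] H}
    (ha : ∀ h : H, lT lam h = lam h • 𝐒 a) (hl : ∀ h : H, Sinv (𝐒 h) = h)
    (hr : ∀ h : H, 𝐒 (Sinv h) = h) (τ : H ⊗[k] H →ₗ[k] k) :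
    toConv (lam ∘ₗ LinearMap.mul' k H) * toConv τ =
      toConv (lam ∘ₗ LinearMap.mul' k H) * toConv (tensorCounit (thetaF τ Sinv (𝐒 a))) := by
  rw [mul_tensorCounit]
  refine WithConv.ext (TensorProduct.ext' fun h l => ?_)
  set ψ : H →ₗ[k] H := LinearMap.mulRight k (𝐒 a) ∘ₗ Sinv ∘ₗ lT (lam ∘ₗ LinearMap.mulRight k l)
  have hθ : thetaF τ Sinv (𝐒 a) ∘ₗ lT (lam ∘ₗ LinearMap.mulRight k l) =
      τ ∘ₗ (TensorProduct.comm k H H).toLinearMap ∘ₗ ψ.rTensor H ∘ₗ comul := by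
    simp only [thetaF, ψ, LinearMap.comp_assoc, comul_comp_lT, LinearMap.rTensor_comp]
  calc (toConv (lam ∘ₗ LinearMap.mul' k H) * toConv τ).ofConv (h ⊗ₜ l)
      = ∑ i ∈ (ℛ k h).index,
          τ ((ℛ k h).right i ⊗ₜ lT (lam ∘ₗ LinearMap.mulLeft k ((ℛ k h).left i)) l) := by
        simp [((ℛ k h).tmul (ℛ k l)).convMul_apply, Finset.sum_product, lT_eq_sum _ (ℛ k l),
          TensorProduct.tmul_sum, TensorProduct.tmul_smul]
    _ = (τ ∘ₗ (TensorProduct.comm k H H).toLinearMap ∘ₗ ψ.rTensor H ∘ₗ comul) h := by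
        simp [ψ, lT_mulLeft_integral ha hl hr, ← (ℛ k h).eq]
    _ = conv (lam ∘ₗ LinearMap.mulRight k l) (thetaF τ Sinv (𝐒 a)) h := by rw [← hθ, ← comp_lT]
    _ = (lam ∘ₗ LinearMap.mul' k H ∘ₗ (rT (thetaF τ Sinv (𝐒 a))).rTensor H) (h ⊗ₜ l) := by
        rw [← comp_rT]; rfl

lemma trip_eq_of_integral {a : H} {Sinv : H →ₗ[k] H}
    (hlam : ∀ f : H →ₗ[k] k, conv f lam = f 1 • lam) (ha : ∀ h : H, lT lam h = lam h • 𝐒 a)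
    (hl : ∀ h : H, Sinv (𝐒 h) = h) (hr : ∀ h : H, 𝐒 (Sinv h) = h) (ρ τ : H ⊗[k] H →ₗ[k] k) :
    trip lam ρ τ =
      lam ∘ₗ LinearMap.mul' k H ∘ₗ (lT (vF ρ) ∘ₗ rT (thetaF τ Sinv (𝐒 a))).rTensor H := by
  rw [trip_eq_ofConv, mul_assoc, integral_mul_eq_mul_tensorCounit ha hl hr, ← mul_assoc,
    mul_integral_eq_tensorCounit_mul hlam, tensorCounit_mul_mul_tensorCounit]
  rfl

end Factorization

theorem antipode_sq_coinner_iff_general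
    (lam : H →ₗ[k] k)
    (hlam_int : ∀ f : H →ₗ[k] k, conv f lam = f 1 • lam)
    (a : H)
    (ha_mod : ∀ h : H, lT lam h = lam h • (𝐒 a))
    (Sinv : H →ₗ[k] H) (hSinv_l : ∀ h : H, Sinv (𝐒 h) = h)
    (hSinv_r : ∀ h : H, 𝐒 (Sinv h) = h)
    (α : H →ₐ[k] k)
    (hα : ∀ h l : H, lam (l * h) = lam ((chiMap Sinv α.toLinearMap h) * l))
    (hinj_l : ∀ h h' : H, (∀ l : H, lam (h * l) = lam (h' * l)) → h = h') :
    (∃ ω ωi : H →ₗ[k] k, conv ω ωi = Coalgebra.counit (R := k) ∧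
        conv ωi ω = Coalgebra.counit (R := k) ∧
        ∀ h : H, 𝐒 (𝐒 h) = sw3 ω LinearMap.id ωi h) ↔
      (∃ ρ τ : (H ⊗[k] H) →ₗ[k] k, ∀ h l : H, lam (l * h) = trip lam ρ τ (h ⊗ₜ[k] l)) := by
  have hS2_Sinv2 : (𝐒 ∘ₗ 𝐒) ∘ₗ (Sinv ∘ₗ Sinv) = LinearMap.id := by ext; simp [hSinv_r]
  have hSinv2_S2 : (Sinv ∘ₗ Sinv) ∘ₗ (𝐒 ∘ₗ 𝐒) = LinearMap.id := by ext; simp [hSinv_l]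
  constructor
  · rintro ⟨ω, ωi, hω, -, hS⟩
    have hS' : 𝐒 ∘ₗ 𝐒 = lT ω ∘ₗ rT ωi := by
      rw [lT_comp_rT_eq_sw3]; exact LinearMap.ext hS
    have hχ : chiMap Sinv α.toLinearMap = lT ωi ∘ₗ rT (conv ω α.toLinearMap) := by
      rw [chiMap_eq_comp_rT,
        eq_lT_comp_rT_of_comp_eq_id hω (P := Sinv ∘ₗ Sinv) (hS' ▸ hS2_Sinv2),
        LinearMap.comp_assoc, rT_comp_rT]
    refine ⟨tensorCounit ωi, tensorCounit (conv ω α.toLinearMap), fun h l => ?_⟩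
    rw [trip_tensorCounit, ← hχ, hα]
    rfl
  · rintro ⟨ρ, τ, hρτ⟩
    set v := vF ρ
    set θ := thetaF τ Sinv (𝐒 a)
    have hχ : chiMap Sinv α.toLinearMap = lT v ∘ₗ rT θ :=
      LinearMap.ext fun h => hinj_l _ _ fun l => by
        rw [← hα, hρτ, trip_eq_of_integral hlam_int ha_mod hSinv_l hSinv_r]
        rfl
    have hvθ : conv v θ = α.toLinearMap := by
      rw [← counit_comp_lT_comp_rT, ← hχ, counit_comp_chiMap hSinv_r]
    set w := conv θ (α.toLinearMap ∘ₗ 𝐒)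
    have hvw : conv v w = counit := by rw [← conv_assoc, hvθ, conv_algHom_comp_antipode]
    have hSinv2 : Sinv ∘ₗ Sinv = lT v ∘ₗ rT w := by
      rw [← rT_comp_rT, ← LinearMap.comp_assoc, ← hχ, chiMap_eq_comp_rT, LinearMap.comp_assoc,
        rT_comp_rT, conv_algHom_comp_antipode, rT_counit, LinearMap.comp_id]
    have hwv : conv w v = counit :=
      conv_eq_counit_of_surjective hvw (hSinv2 ▸ fun y => ⟨𝐒 (𝐒 y), by simp [hSinv_l]⟩)
    refine ⟨w, v, hwv, hvw, fun h => ?_⟩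
    rw [← lT_comp_rT_eq_sw3,
      ← eq_lT_comp_rT_of_comp_eq_id hvw (P := 𝐒 ∘ₗ 𝐒) (hSinv2 ▸ hSinv2_S2)]
    rfl

/-- $S^2$ is co-inner iff the integral satisfies
$λ(lh) = ρ(h_1 ⊗ l_1) λ(h_2 l_2) τ(h_3 ⊗ l_3)$ for some linear forms $ρ, τ$ on $H ⊗ H$. -/
theorem antipode_sq_coinner_iff
    (lam : H →ₗ[k] k) (hlam_ne : lam ≠ 0)
    (hlam_int : ∀ f : H →ₗ[k] k, conv f lam = f 1 • lam)
    (a : H) (ha_ne : a ≠ 0) (ha_grp : Coalgebra.comul (R := k) a = a ⊗ₜ[k] a)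
    (ha_mod : ∀ h : H, lT lam h = lam h • (𝐒 a))
    (ha_S2 : ∀ h : H, lam (𝐒 (𝐒 h)) = lam (a * h * 𝐒 a))
    (Sinv : H →ₗ[k] H) (hSinv_l : ∀ h : H, Sinv (𝐒 h) = h)
    (hSinv_r : ∀ h : H, 𝐒 (Sinv h) = h)
    (α : H →ₐ[k] k)
    (hα : ∀ h l : H, lam (l * h) = lam ((chiMap Sinv α.toLinearMap h) * l))
    (hχ_bij : Function.Bijective (chiMap Sinv α.toLinearMap))
    (hχ_mul : ∀ h l : H, chiMap Sinv α.toLinearMap (h * l) =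
      chiMap Sinv α.toLinearMap h * chiMap Sinv α.toLinearMap l)
    (hinj_r : ∀ h h' : H, (∀ l : H, lam (l * h) = lam (l * h')) → h = h')
    (hinj_l : ∀ h h' : H, (∀ l : H, lam (h * l) = lam (h' * l)) → h = h')
    (himg_rl : ∀ h : H, ∃ h' : H, ∀ l : H, lam (l * h) = lam (h' * l))
    (himg_lr : ∀ h : H, ∃ h' : H, ∀ l : H, lam (h * l) = lam (l * h'))
    (hdense : ∀ (f : H →ₗ[k] k) (s : Finset H), ∃ h : H, ∀ x ∈ s, lam (x * h) = f x) :
    (∃ ω ωi : H →ₗ[k] k, conv ω ωi = Coalgebra.counit (R := k) ∧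
        conv ωi ω = Coalgebra.counit (R := k) ∧
        ∀ h : H, 𝐒 (𝐒 h) = sw3 ω LinearMap.id ωi h) ↔
      (∃ ρ τ : (H ⊗[k] H) →ₗ[k] k, ∀ h l : H, lam (l * h) = trip lam ρ τ (h ⊗ₜ[k] l)) :=
  antipode_sq_coinner_iff_general lam hlam_int a ha_mod Sinv hSinv_l hSinv_r α hα hinj_l
end

section
/- For all h, l ∈ H one has λ(h l₂)·l₁ = λ(h₂ l)·S(h₁) and λ(h l₁)·l₂ = λ(h₁ l)·S⁻¹(h₂)·a⁻¹. -/
open TensorProduct Coalgebra HopfAlgebra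

variable {k H : Type*} [Field k] [Ring H] [HopfAlgebra k H]

/-- The antipode of `H`, as a linear map. -/
local notation "𝐒" => HopfAlgebra.antipode (R := k)

/-!
The identities `S(h₁) h₂ ⊗ h₃ = 1 ⊗ h` and `h₁ ⊗ S⁻¹(h₃) h₂ = h ⊗ 1` give
`(1 ⊗ h) Δ(l) = Σ (S(h₁) ⊗ 1) Δ(h₂ l)` and `(h ⊗ 1) Δ(l) = Σ (1 ⊗ S⁻¹(h₂)) Δ(h₁ l)`.
Apply `id ⊗ λ`, resp. `λ ⊗ id`, which commute with left multiplication in the other factor: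
the left sides become `λ(h l₂) l₁` and `λ(h l₁) l₂`, and the right sides collapse by
`λ(x₂) x₁ = λ(x) 1` (the left integral property tested against all functionals) and
`λ(x₁) x₂ = λ(x) a⁻¹`.
-/

namespace TensorProduct

variable {R A B : Type*} [CommSemiring R] [Semiring A] [Algebra R A] [Semiring B] [Algebra R B]

lemma rid_lTensor_tmul_mul (f : B →ₗ[R] R) (x : A) (y : B) (t : A ⊗[R] B) :
    TensorProduct.rid R A (f.lTensor A ((x ⊗ₜ y) * t)) =
      x * TensorProduct.rid R A ((f ∘ₗ LinearMap.mulLeft R y).lTensor A t) := by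
  induction t using TensorProduct.induction_on with
  | zero => simp
  | tmul a b => simp
  | add s t hs ht => simp only [mul_add, map_add, hs, ht]

lemma lid_rTensor_tmul_mul (f : A →ₗ[R] R) (x : A) (y : B) (t : A ⊗[R] B) :
    TensorProduct.lid R B (f.rTensor B ((x ⊗ₜ y) * t)) =
      y * TensorProduct.lid R B ((f ∘ₗ LinearMap.mulLeft R x).rTensor B t) := by
  induction t using TensorProduct.induction_on with
  | zero => simp
  | tmul a b => simp
  | add s t hs ht => simp only [mul_add, map_add, hs, ht]

end TensorProduct

namespace HopfAlgebra

variable {R A : Type*} [CommSemiring R] [Semiring A] [HopfAlgebra R A]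

lemma sum_antipode_tmul_one_mul_comul {h : A} {ι : Type*} (r : Repr R h ι) :
    ∑ i ∈ r.index, (antipode R (r.left i) ⊗ₜ[R] (1 : A)) * comul (r.right i) = 1 ⊗ₜ h := by
  set Θ := ((LinearMap.mul' R A ∘ₗ (antipode R).rTensor A).rTensor A) ∘ₗ
    (TensorProduct.assoc R A A A).symm.toLinearMap
  have hΘ : ∀ x y : A, (antipode R x ⊗ₜ[R] (1 : A)) * comul y = Θ (x ⊗ₜ comul y) := by
    intro x y
    induction comul (R := R) y using TensorProduct.induction_on with
    | zero => simp
    | tmul a b => simp [Θ]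
    | add s t hs ht => simp only [mul_add, tmul_add, map_add, hs, ht]
  calc ∑ i ∈ r.index, (antipode R (r.left i) ⊗ₜ[R] (1 : A)) * comul (r.right i)
      = Θ ((comul (R := R)).lTensor A (comul h)) := by
        simp only [hΘ, ← r.eq, map_sum, LinearMap.lTensor_tmul]
    _ = ((LinearMap.mul' R A ∘ₗ (antipode R).rTensor A ∘ₗ comul).rTensor A) (comul h) := by
        simp only [Θ, LinearMap.comp_apply, LinearEquiv.coe_coe, coassoc_symm_apply,
          LinearMap.rTensor_comp_apply]
    _ = 1 ⊗ₜ h := by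
        rw [mul_antipode_rTensor_comul, LinearMap.rTensor_comp_apply, rTensor_counit_comul]
        simp

lemma mul_comm_lTensor_comul_of_leftInverse_of_rightInverse {Sinv : A →ₗ[R] A}
    (hl : Function.LeftInverse Sinv (antipode R)) (hr : Function.RightInverse Sinv (antipode R)) :
    LinearMap.mul' R A ∘ₗ (TensorProduct.comm R A A).toLinearMap ∘ₗ Sinv.lTensor A ∘ₗ comul =
      Algebra.linearMap R A ∘ₗ counit := by
  have hS : antipode R ∘ₗ LinearMap.mul' R A ∘ₗ (TensorProduct.comm R A A).toLinearMap ∘ₗ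
      Sinv.lTensor A = LinearMap.mul' R A ∘ₗ (antipode R).rTensor A := by
    ext x y
    simp [antipode_mul_antidistrib, hr y]
  ext x
  apply hl.injective
  have := congr($hS (comul x))
  simp only [LinearMap.comp_apply] at this ⊢
  rw [this, mul_antipode_rTensor_comul_apply, Algebra.linearMap_apply,
    Algebra.algebraMap_eq_smul_one, map_smul, antipode_one]

lemma sum_one_tmul_inv_antipode_mul_comul {Sinv : A →ₗ[R] A}
    (hl : Function.LeftInverse Sinv (antipode R)) (hr : Function.RightInverse Sinv (antipode R))
    {h : A} {ι : Type*} (r : Repr R h ι) :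
    ∑ i ∈ r.index, ((1 : A) ⊗ₜ[R] Sinv (r.right i)) * comul (r.left i) = h ⊗ₜ 1 := by
  set Θ := ((LinearMap.mul' R A ∘ₗ (TensorProduct.comm R A A).toLinearMap ∘ₗ
    Sinv.lTensor A).lTensor A) ∘ₗ (TensorProduct.assoc R A A A).toLinearMap
  have hΘ : ∀ x y : A, ((1 : A) ⊗ₜ[R] Sinv y) * comul x = Θ (comul x ⊗ₜ y) := by
    intro x y
    induction comul (R := R) x using TensorProduct.induction_on with
    | zero => simp
    | tmul a b => simp [Θ]
    | add s t hs ht => simp only [mul_add, add_tmul, map_add, hs, ht]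
  calc ∑ i ∈ r.index, ((1 : A) ⊗ₜ[R] Sinv (r.right i)) * comul (r.left i)
      = Θ ((comul (R := R)).rTensor A (comul h)) := by
        simp only [hΘ, ← r.eq, map_sum, LinearMap.rTensor_tmul]
    _ = ((LinearMap.mul' R A ∘ₗ (TensorProduct.comm R A A).toLinearMap ∘ₗ
          Sinv.lTensor A ∘ₗ comul).lTensor A) (comul h) := by
        simp only [Θ, LinearMap.comp_apply, LinearEquiv.coe_coe, coassoc_apply,
          LinearMap.lTensor_comp_apply]
    _ = h ⊗ₜ 1 := by
        rw [mul_comm_lTensor_comul_of_leftInverse_of_rightInverse hl hr, LinearMap.lTensor_comp_apply,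
          lTensor_counit_comul]
        simp

end HopfAlgebra

lemma rid_lTensor_comul_of_conv_eq_smul (lam : H →ₗ[k] k)
    (hlam : ∀ f : H →ₗ[k] k, conv f lam = f 1 • lam) (x : H) :
    TensorProduct.rid k H (lam.lTensor H (comul x)) = lam x • 1 := by
  have hdual : ∀ (f : H →ₗ[k] k) (t : H ⊗[k] H),
      f (TensorProduct.rid k H (lam.lTensor H t)) = LinearMap.mul' k k (map f lam t) := by
    intro f t
    induction t using TensorProduct.induction_on with
    | zero => simp
    | tmul a b => simp [mul_comm]
    | add s t hs ht => simp only [map_add, hs, ht]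
  rw [← sub_eq_zero]
  refine (Module.forall_dual_apply_eq_zero_iff k _).mp fun f => ?_
  have hf := LinearMap.congr_fun (hlam f) x
  simp only [conv, LinearMap.comp_apply, LinearMap.smul_apply, smul_eq_mul] at hf
  rw [map_sub, hdual, hf, map_smul, smul_eq_mul, mul_comm, sub_self]

theorem integral_exchange_formulas_general
    (lam : H →ₗ[k] k)
    (hlam_int : ∀ f : H →ₗ[k] k, conv f lam = f 1 • lam)
    (a : H)
    (ha_mod : ∀ h : H, lT lam h = lam h • (𝐒 a))
    (Sinv : H →ₗ[k] H) (hSinv_l : ∀ h : H, Sinv (𝐒 h) = h)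
    (hSinv_r : ∀ h : H, 𝐒 (Sinv h) = h) :
    ∀ h l : H,
      ((TensorProduct.rid k H)
          ((LinearMap.lTensor H (lam ∘ₗ LinearMap.mulLeft k h)) (Coalgebra.comul (R := k) l)) =
        (TensorProduct.rid k H)
          ((TensorProduct.map (𝐒 : H →ₗ[k] H) (lam ∘ₗ LinearMap.mulRight k l))
            (Coalgebra.comul (R := k) h))) ∧
      ((TensorProduct.lid k H)
          ((LinearMap.rTensor H (lam ∘ₗ LinearMap.mulLeft k h)) (Coalgebra.comul (R := k) l)) =
        ((TensorProduct.lid k H)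
          ((TensorProduct.map (lam ∘ₗ LinearMap.mulRight k l) Sinv)
            (Coalgebra.comul (R := k) h))) * (𝐒 a)) := by
  intro h l
  set r := ℛ k h
  constructor
  · calc _ = TensorProduct.rid k H (lam.lTensor H ((1 ⊗ₜ h) * comul l)) := by
          rw [rid_lTensor_tmul_mul, one_mul]
      _ = TensorProduct.rid k H (lam.lTensor H
            (∑ i ∈ r.index, (𝐒 (r.left i) ⊗ₜ[k] (1 : H)) * comul (r.right i * l))) := by
          rw [← sum_antipode_tmul_one_mul_comul r, Finset.sum_mul]
          simp only [Bialgebra.comul_mul, mul_assoc]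
      _ = ∑ i ∈ r.index, lam (r.right i * l) • 𝐒 (r.left i) := by
          simp only [map_sum, rid_lTensor_tmul_mul, LinearMap.mulLeft_one, LinearMap.comp_id,
            rid_lTensor_comul_of_conv_eq_smul lam hlam_int, mul_smul_comm, mul_one]
      _ = _ := by
          rw [← r.eq]
          simp
  · calc _ = TensorProduct.lid k H (lam.rTensor H ((h ⊗ₜ 1) * comul l)) := by
          rw [lid_rTensor_tmul_mul, one_mul]
      _ = TensorProduct.lid k H (lam.rTensor H
            (∑ i ∈ r.index, ((1 : H) ⊗ₜ[k] Sinv (r.right i)) * comul (r.left i * l))) := by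
          rw [← sum_one_tmul_inv_antipode_mul_comul hSinv_l hSinv_r r, Finset.sum_mul]
          simp only [Bialgebra.comul_mul, mul_assoc]
      _ = (∑ i ∈ r.index, lam (r.left i * l) • Sinv (r.right i)) * 𝐒 a := by
          have hmod : ∀ x, TensorProduct.lid k H (lam.rTensor H (comul x)) = lam x • 𝐒 a := ha_mod
          simp only [map_sum, lid_rTensor_tmul_mul, LinearMap.mulLeft_one, LinearMap.comp_id,
            hmod, Finset.sum_mul, mul_smul_comm, smul_mul_assoc]
      _ = _ := by
          rw [← r.eq]
          simp

/-- For all $h, l ∈ H$: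
$λ(h l_2) l_1 = λ(h_2 l) S(h_1)$ and $λ(h l_1) l_2 = λ(h_1 l) S^{-1}(h_2) a^{-1}$. -/
theorem integral_exchange_formulas
    (lam : H →ₗ[k] k) (hlam_ne : lam ≠ 0)
    (hlam_int : ∀ f : H →ₗ[k] k, conv f lam = f 1 • lam)
    (a : H) (ha_ne : a ≠ 0) (ha_grp : Coalgebra.comul (R := k) a = a ⊗ₜ[k] a)
    (ha_mod : ∀ h : H, lT lam h = lam h • (𝐒 a))
    (ha_S2 : ∀ h : H, lam (𝐒 (𝐒 h)) = lam (a * h * 𝐒 a))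
    (Sinv : H →ₗ[k] H) (hSinv_l : ∀ h : H, Sinv (𝐒 h) = h)
    (hSinv_r : ∀ h : H, 𝐒 (Sinv h) = h) :
    ∀ h l : H,
      ((TensorProduct.rid k H)
          ((LinearMap.lTensor H (lam ∘ₗ LinearMap.mulLeft k h)) (Coalgebra.comul (R := k) l)) =
        (TensorProduct.rid k H)
          ((TensorProduct.map (𝐒 : H →ₗ[k] H) (lam ∘ₗ LinearMap.mulRight k l))
            (Coalgebra.comul (R := k) h))) ∧
      ((TensorProduct.lid k H)
          ((LinearMap.rTensor H (lam ∘ₗ LinearMap.mulLeft k h)) (Coalgebra.comul (R := k) l)) =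
        ((TensorProduct.lid k H)
          ((TensorProduct.map (lam ∘ₗ LinearMap.mulRight k l) Sinv)
            (Coalgebra.comul (R := k) h))) * (𝐒 a)) :=
  integral_exchange_formulas_general lam hlam_int a ha_mod Sinv hSinv_l hSinv_r
end

section
/- Let γ : H → k be an algebra map, with convolution inverse γ⁻¹ = γ∘S. Then the elements w := γ⁻¹(U¹)U² and w' := γ⁻¹(R¹)R² of H satisfy w·w' = 1 and γ⁻¹(h₁)·h₂·γ(h₃) = w·h·w' for all h ∈ H; in particular, the co-inner automorphism of H induced by γ⁻¹ is an inner automorphism. -/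
/-!
Since `k` is commutative and `S` is an anti-homomorphism, `γ⁻¹ = γ ∘ S` is again an algebra map,
hence so is `h ⊗ l ↦ γ⁻¹(h) l : H ⊗ H → H`. Applying it to `U R = 1` gives `w w' = 1`, and applying
it to `h₂ ⊗ h₁ = R Δ(h) U` gives `γ⁻¹(h₁) h₂ = w γ⁻¹(h₂) h₁ w'`. Therefore
`γ⁻¹(h₁) h₂ γ(h₃) = w γ⁻¹(h₁₂) h₁₁ γ(h₂) w'`, and by coassociativity the middle factor is
`(γ⁻¹ * γ)(h₂) h₁ = ε(h₂) h₁ = h`.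
-/

open TensorProduct Coalgebra HopfAlgebra

variable {k H : Type*} [Field k] [Ring H] [HopfAlgebra k H]

/-- The antipode of `H`, as a linear map. -/
local notation "𝐒" => HopfAlgebra.antipode (R := k)

section CompAntipode

variable {R A B : Type*} [CommSemiring R] [Semiring A] [HopfAlgebra R A]
  [CommSemiring B] [Algebra R B]

/-- The convolution inverse `γ⁻¹ = γ ∘ S` of the algebra map `γ`. -/
noncomputable def AlgHom.compAntipode (γ : A →ₐ[R] B) : A →ₐ[R] B :=
  .ofLinearMap (γ.toLinearMap ∘ₗ antipode R) (by simp) fun a b => by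
    simp [antipode_mul_antidistrib, mul_comm]

lemma AlgHom.toLinearMap_compAntipode (γ : A →ₐ[R] B) :
    γ.compAntipode.toLinearMap = γ.toLinearMap ∘ₗ antipode R := rfl

end CompAntipode

lemma conv_compAntipode_self (γ : H →ₐ[k] k) :
    conv γ.compAntipode.toLinearMap γ.toLinearMap = counit := by
  have hmul : LinearMap.mul' k k ∘ₗ TensorProduct.map γ.toLinearMap γ.toLinearMap =
      γ.toLinearMap ∘ₗ LinearMap.mul' k H :=
    TensorProduct.ext' fun a b => by simp
  ext h
  change LinearMap.mul' k k (TensorProduct.map (γ.toLinearMap ∘ₗ 𝐒) γ.toLinearMap (comul h)) = _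
  rw [← LinearMap.map_comp_rTensor, LinearMap.comp_apply, ← LinearMap.comp_apply (LinearMap.mul' k k),
    hmul, LinearMap.comp_apply, mul_antipode_rTensor_comul_apply]
  simp

lemma lap_eq_algHom (φ : H →ₐ[k] k) :
    lap φ.toLinearMap = ((Algebra.TensorProduct.lid k H).toAlgHom.comp
      (Algebra.TensorProduct.map φ (AlgHom.id k H))).toLinearMap :=
  TensorProduct.ext' fun a b => by simp [lap]

lemma lap_mul (φ : H →ₐ[k] k) (x y : H ⊗[k] H) :
    lap φ.toLinearMap (x * y) = lap φ.toLinearMap x * lap φ.toLinearMap y := by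
  simp only [lap_eq_algHom, AlgHom.toLinearMap_apply, map_mul]

lemma lap_one (φ : H →ₐ[k] k) : lap φ.toLinearMap (1 : H ⊗[k] H) = 1 := by
  simp only [lap_eq_algHom, AlgHom.toLinearMap_apply, map_one]

lemma lap_comm (f : H →ₗ[k] k) (x : H ⊗[k] H) : lap f (TensorProduct.comm k H H x) = rap f x := by
  induction x using TensorProduct.induction_on with
  | zero => simp
  | tmul a b => simp [lap, rap]
  | add x y hx hy => simp only [map_add, hx, hy]

lemma rap_comp_rTensor (p : H →ₗ[k] k) (g : H →ₗ[k] H) :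
    rap p ∘ₗ g.rTensor H = g ∘ₗ rap p :=
  TensorProduct.ext' fun a b => by simp [rap]

lemma sw3_id_apply (f p : H →ₗ[k] k) (h : H) :
    sw3 f LinearMap.id p h = rap p ((lap f ∘ₗ comul).rTensor H (comul h)) := by
  have : (TensorProduct.lid k H).toLinearMap ∘ₗ (TensorProduct.rid k (k ⊗[k] H)).toLinearMap
      ∘ₗ TensorProduct.map (TensorProduct.map f LinearMap.id) p = rap p ∘ₗ (lap f).rTensor H :=
    TensorProduct.ext_threefold fun x y z => by simp [lap, rap]
  rw [LinearMap.rTensor_comp_apply, ← LinearMap.comp_apply (rap p), ← this]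
  rfl

/-- Coassociativity turns `p(h₂) f(h₁₂) h₁₁` into `(f * p)(h₂) h₁`. -/
lemma rap_rTensor_rap_comul_of_conv_eq_counit (f p : H →ₗ[k] k) (hfp : conv f p = counit) (h : H) :
    rap p ((rap f ∘ₗ comul).rTensor H (comul h)) = h := by
  have hassoc : rap p ∘ₗ (rap f).rTensor H ∘ₗ (TensorProduct.assoc k H H H).symm.toLinearMap =
      (TensorProduct.rid k H).toLinearMap ∘ₗ (LinearMap.mul' k k ∘ₗ TensorProduct.map f p).lTensor H :=
    TensorProduct.ext_threefold' fun x y z => by simp [rap, smul_smul, mul_comm]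
  have hconv := LinearMap.congr_fun hassoc ((comul (R := k)).lTensor H (comul h))
  simp only [LinearMap.comp_apply, LinearEquiv.coe_coe] at hconv
  rw [LinearMap.rTensor_comp_apply, ← coassoc_symm_apply, hconv, ← LinearMap.lTensor_comp_apply,
    show (LinearMap.mul' k k ∘ₗ TensorProduct.map f p) ∘ₗ comul = conv f p from rfl, hfp,
    lTensor_counit_comul, TensorProduct.rid_tmul, one_smul]

lemma lap_mul_lap_eq_one {U R : H ⊗[k] H} (hUR : U * R = 1) (φ : H →ₐ[k] k) :
    lap φ.toLinearMap U * lap φ.toLinearMap R = 1 := by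
  rw [← lap_mul, hUR, lap_one]

lemma lap_comul_eq_mul_rap_comul_mul {R U : H ⊗[k] H} (hUR : U * R = 1)
    (hqt : ∀ h : H, TensorProduct.comm k H H (comul (R := k) h) = R * comul (R := k) h * U)
    (φ : H →ₐ[k] k) (h : H) :
    lap φ.toLinearMap (comul h) =
      lap φ.toLinearMap U * rap φ.toLinearMap (comul h) * lap φ.toLinearMap R := by
  rw [← lap_comm, hqt, lap_mul, lap_mul]
  calc lap φ.toLinearMap (comul h)
      = (lap φ.toLinearMap U * lap φ.toLinearMap R) * lap φ.toLinearMap (comul h) *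
          (lap φ.toLinearMap U * lap φ.toLinearMap R) := by
        rw [lap_mul_lap_eq_one hUR, one_mul, mul_one]
    _ = _ := by simp only [mul_assoc]

theorem coinner_of_grouplike_is_inner_general
    (R U : H ⊗[k] H) (hUR : U * R = 1)
    (hqt4 : ∀ h : H, (TensorProduct.comm k H H) (Coalgebra.comul (R := k) h) =
      R * (Coalgebra.comul (R := k) h) * U)
    (γ : H →ₐ[k] k) :
    (lap (γ.toLinearMap ∘ₗ (𝐒 : H →ₗ[k] H)) U) * (lap (γ.toLinearMap ∘ₗ (𝐒 : H →ₗ[k] H)) R) = 1 ∧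
      ∀ h : H, sw3 (γ.toLinearMap ∘ₗ (𝐒 : H →ₗ[k] H)) LinearMap.id γ.toLinearMap h =
        (lap (γ.toLinearMap ∘ₗ (𝐒 : H →ₗ[k] H)) U) * h *
          (lap (γ.toLinearMap ∘ₗ (𝐒 : H →ₗ[k] H)) R) := by
  rw [← γ.toLinearMap_compAntipode]
  refine ⟨lap_mul_lap_eq_one hUR _, fun h => ?_⟩
  set w := lap γ.compAntipode.toLinearMap U
  set w' := lap γ.compAntipode.toLinearMap R
  have hconj : lap γ.compAntipode.toLinearMap ∘ₗ comul =
      (LinearMap.mulLeft k w ∘ₗ LinearMap.mulRight k w') ∘ₗ rap γ.compAntipode.toLinearMap ∘ₗ comul :=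
    LinearMap.ext fun a => by
      simp [lap_comul_eq_mul_rap_comul_mul hUR hqt4, w, w', mul_assoc]
  rw [sw3_id_apply, hconj, LinearMap.rTensor_comp_apply, ← LinearMap.comp_apply (rap _),
    rap_comp_rTensor, LinearMap.comp_apply,
    rap_rTensor_rap_comul_of_conv_eq_counit _ _ (conv_compAntipode_self γ)]
  simp [mul_assoc]

/-- In an almost cocommutative Hopf algebra $(H,R)$, for an algebra map
$γ : H → k$, the elements $w = γ^{-1}(U^1)U^2$ and $w' = γ^{-1}(R^1)R^2$ (with $U = R^{-1}$,
$γ^{-1} = γ∘S$) satisfy $w w' = 1$ and $γ^{-1}(h_1) h_2 γ(h_3) = w h w'$ for all $h$;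
i.e. the co-inner automorphism induced by $γ^{-1}$ is inner. -/
theorem coinner_of_grouplike_is_inner
    (R U : H ⊗[k] H) (hRU : R * U = 1) (hUR : U * R = 1)
    (hqt4 : ∀ h : H, (TensorProduct.comm k H H) (Coalgebra.comul (R := k) h) =
      R * (Coalgebra.comul (R := k) h) * U)
    (γ : H →ₐ[k] k) :
    (lap (γ.toLinearMap ∘ₗ (𝐒 : H →ₗ[k] H)) U) * (lap (γ.toLinearMap ∘ₗ (𝐒 : H →ₗ[k] H)) R) = 1 ∧
      ∀ h : H, sw3 (γ.toLinearMap ∘ₗ (𝐒 : H →ₗ[k] H)) LinearMap.id γ.toLinearMap h =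
        (lap (γ.toLinearMap ∘ₗ (𝐒 : H →ₗ[k] H)) U) * h *
          (lap (γ.toLinearMap ∘ₗ (𝐒 : H →ₗ[k] H)) R) :=
  coinner_of_grouplike_is_inner_general R U hUR hqt4 γ
end

section
/- For any algebra map η : H → k, the element c_η := a_η·b_{η⁻¹} (where η⁻¹ = η∘S, so c_η = η(r¹)r²·η(R²)R¹) is a grouplike element of H lying in the center of H, and for any algebra maps η, ν : H → k one has c_{η*ν} = c_η·c_ν. -/
/-!
The slant maps `η ⊗ id` and `id ⊗ η` are algebra maps because `η` is, so they can be applied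
to the quasitriangular axioms. Write `a = η(R¹)R²` and `b = η(R²)R¹`. From `(id ⊗ Δ)R = R¹r¹ ⊗ r² ⊗ R²`
one gets that `a` is grouplike and `b_{η*ν} = b_ν b_η`; from `(Δ ⊗ id)R = R¹ ⊗ r¹ ⊗ R²r²`, that
`b` is grouplike and `a_{η*ν} = a_η a_ν`. Slanting `Δᵒᵖ(h) R = R Δ(h)` gives
`h₁η(h₂) a = a η(h₁)h₂` and `η(h₁)h₂ b = b h₁η(h₂)`, so `ab` commutes with every `h₁η(h₂)`, and
these exhaust `H` because `h ↦ h₁η(h₂)` has inverse `h ↦ h₁η(S h₂)`. Centrality then turns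
`a_η a_ν b_ν b_η` into `(a_η b_η)(a_ν b_ν)`.
-/

open TensorProduct Coalgebra HopfAlgebra

variable {k H : Type*} [Field k] [Ring H] [HopfAlgebra k H]

/-- The antipode of `H`, as a linear map. -/
local notation "𝐒" => HopfAlgebra.antipode (R := k)

section Slant

variable {R A B C : Type*} [CommSemiring R] [Semiring A] [Algebra R A] [Semiring B] [Algebra R B]
  [Semiring C] [Algebra R C]

noncomputable def slantLeft (η : A →ₐ[R] R) : A ⊗[R] B →ₐ[R] B :=
  (Algebra.TensorProduct.lid R B).toAlgHom.comp (Algebra.TensorProduct.rTensor B η)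

noncomputable def slantRight (η : B →ₐ[R] R) : A ⊗[R] B →ₐ[R] A :=
  (Algebra.TensorProduct.rid R R A).toAlgHom.comp (Algebra.TensorProduct.lTensor A η)

@[simp] lemma slantLeft_tmul (η : A →ₐ[R] R) (a : A) (b : B) :
    slantLeft η (a ⊗ₜ[R] b) = η a • b := rfl

@[simp] lemma slantRight_tmul (η : B →ₐ[R] R) (a : A) (b : B) :
    slantRight η (a ⊗ₜ[R] b) = η b • a := rfl

lemma slantLeft_lTensor (η : A →ₐ[R] R) (f : B →ₗ[R] C) (w : A ⊗[R] B) :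
    slantLeft η (f.lTensor A w) = f (slantLeft η w) := by
  induction w using TensorProduct.induction_on <;> simp_all

lemma slantRight_rTensor (η : B →ₐ[R] R) (f : A →ₗ[R] C) (w : A ⊗[R] B) :
    slantRight η (f.rTensor B w) = f (slantRight η w) := by
  induction w using TensorProduct.induction_on <;> simp_all

lemma slantLeft_rTensor (η : C →ₐ[R] R) (f : A →ₐ[R] C) (w : A ⊗[R] B) :
    slantLeft η (f.toLinearMap.rTensor B w) = slantLeft (η.comp f) w := by
  induction w using TensorProduct.induction_on <;> simp_all

lemma slantRight_lTensor (η : C →ₐ[R] R) (f : B →ₐ[R] C) (w : A ⊗[R] B) :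
    slantRight η (f.toLinearMap.lTensor A w) = slantRight (η.comp f) w := by
  induction w using TensorProduct.induction_on <;> simp_all

lemma slantLeft_comm (η : B →ₐ[R] R) (w : A ⊗[R] B) :
    slantLeft η (TensorProduct.comm R A B w) = slantRight η w := by
  induction w using TensorProduct.induction_on <;> simp_all

lemma slantRight_comm (η : A →ₐ[R] R) (w : A ⊗[R] B) :
    slantRight η (TensorProduct.comm R A B w) = slantLeft η w := by
  induction w using TensorProduct.induction_on <;> simp_all

end Slant

lemma lap_eq_slantLeft (η : H →ₐ[k] k) (w : H ⊗[k] H) :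
    lap η.toLinearMap w = slantLeft η w := by
  induction w using TensorProduct.induction_on <;> simp_all [lap]

lemma rap_eq_slantRight (η : H →ₐ[k] k) (w : H ⊗[k] H) :
    rap η.toLinearMap w = slantRight η w := by
  induction w using TensorProduct.induction_on <;> simp_all [rap]

lemma conv_eq_productMap_comp_comul (η ν : H →ₐ[k] k) :
    conv η.toLinearMap ν.toLinearMap =
      (Algebra.TensorProduct.productMap η ν).toLinearMap ∘ₗ comul := by
  rw [Algebra.TensorProduct.productMap_eq_comp_map]; rfl

lemma lap_conv_eq_slantLeft (η ν : H →ₐ[k] k) (w : H ⊗[k] H) :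
    lap (conv η.toLinearMap ν.toLinearMap) w =
      slantLeft (Algebra.TensorProduct.productMap η ν) (comul.rTensor H w) := by
  induction w using TensorProduct.induction_on <;> simp_all [lap, conv_eq_productMap_comp_comul]

lemma rap_conv_eq_slantRight (η ν : H →ₐ[k] k) (w : H ⊗[k] H) :
    rap (conv η.toLinearMap ν.toLinearMap) w =
      slantRight (Algebra.TensorProduct.productMap η ν) (comul.lTensor H w) := by
  induction w using TensorProduct.induction_on <;> simp_all [rap, conv_eq_productMap_comp_comul]

lemma counit_lap (η : H →ₐ[k] k) (w : H ⊗[k] H) :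
    counit (R := k) (lap η.toLinearMap w) = η (rap counit w) := by
  induction w using TensorProduct.induction_on <;> simp_all [lap, rap, mul_comm]

lemma counit_rap (η : H →ₐ[k] k) (w : H ⊗[k] H) :
    counit (R := k) (rap η.toLinearMap w) = η (lap counit w) := by
  induction w using TensorProduct.induction_on <;> simp_all [lap, rap, mul_comm]

lemma conv_comp_antipode (η : H →ₐ[k] k) :
    conv η.toLinearMap (η.toLinearMap ∘ₗ 𝐒) = counit := by
  have h := LinearMap.algHom_comp_convMul_distrib η (WithConv.toConv .id) (WithConv.toConv 𝐒)
  rw [LinearMap.id_mul_antipode, LinearMap.comp_id] at h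
  calc conv η.toLinearMap (η.toLinearMap ∘ₗ 𝐒)
      = η.toLinearMap ∘ₗ (1 : WithConv (H →ₗ[k] H)).ofConv := h.symm
    _ = counit := by ext; simp

lemma rap_comul_rap_comul (f g : H →ₗ[k] k) (h : H) :
    rap f (comul (rap g (comul h))) = rap (conv f g) (comul h) := by
  have hreassoc : rap f ∘ₗ comul ∘ₗ rap g =
      (TensorProduct.rid k H).toLinearMap ∘ₗ (LinearMap.mul' k k ∘ₗ TensorProduct.map f g).lTensor H
        ∘ₗ (TensorProduct.assoc k H H H).toLinearMap ∘ₗ comul.rTensor H := by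
    ext x y
    have key : ∀ p : H ⊗[k] H, g y • rap f p = TensorProduct.rid k H
        ((LinearMap.mul' k k ∘ₗ TensorProduct.map f g).lTensor H
          (TensorProduct.assoc k H H H (p ⊗ₜ[k] y))) := by
      intro p
      induction p using TensorProduct.induction_on <;>
        simp_all [rap, smul_smul, mul_comm, TensorProduct.add_tmul]
    simpa [rap] using key (comul x)
  have hcomp : (rap f ∘ₗ comul ∘ₗ rap g) ∘ₗ comul = rap (k := k) (conv f g) ∘ₗ comul := by
    rw [hreassoc]
    simp only [rap, conv, coassoc_simps]
  exact congr($hcomp h)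

lemma rap_counit_comul (h : H) : rap (k := k) counit (comul h) = h := by
  simp [rap, Coalgebra.lTensor_counit_comul]

lemma rap_comul_surjective (η : H →ₐ[k] k) :
    Function.Surjective fun h : H ↦ rap η.toLinearMap (comul h) := fun x ↦
  ⟨rap (η.toLinearMap ∘ₗ 𝐒) (comul x), by
    simp only [rap_comul_rap_comul, conv_comp_antipode, rap_counit_comul]⟩

section Quasitriangular

variable {R : H ⊗[k] H}

local notation "incl₁" => AlgHom.toLinearMap (Algebra.TensorProduct.includeLeft : H →ₐ[k] H ⊗[k] H)
local notation "incl₂" => AlgHom.toLinearMap (Algebra.TensorProduct.includeRight : H →ₐ[k] H ⊗[k] H)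

lemma isGroupLikeElem_lap
    (hΔ₂ : comul.lTensor H R = LinearMap.lTensor H incl₂ R * LinearMap.lTensor H incl₁ R)
    (hε₂ : rap counit R = 1) (η : H →ₐ[k] k) :
    IsGroupLikeElem k (lap η.toLinearMap R) where
  counit_eq_one := by rw [counit_lap, hε₂, map_one]
  comul_eq_tmul_self := by
    rw [lap_eq_slantLeft, ← slantLeft_lTensor, hΔ₂, map_mul, slantLeft_lTensor,
      slantLeft_lTensor]
    simp

lemma isGroupLikeElem_rap
    (hΔ₁ : comul.rTensor H R = LinearMap.rTensor H incl₁ R * LinearMap.rTensor H incl₂ R)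
    (hε₁ : lap counit R = 1) (η : H →ₐ[k] k) :
    IsGroupLikeElem k (rap η.toLinearMap R) where
  counit_eq_one := by rw [counit_rap, hε₁, map_one]
  comul_eq_tmul_self := by
    rw [rap_eq_slantRight, ← slantRight_rTensor, hΔ₁, map_mul, slantRight_rTensor,
      slantRight_rTensor]
    simp

lemma lap_conv
    (hΔ₁ : comul.rTensor H R = LinearMap.rTensor H incl₁ R * LinearMap.rTensor H incl₂ R)
    (η ν : H →ₐ[k] k) :
    lap (conv η.toLinearMap ν.toLinearMap) R = lap η.toLinearMap R * lap ν.toLinearMap R := by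
  rw [lap_conv_eq_slantLeft, hΔ₁, map_mul, slantLeft_rTensor, slantLeft_rTensor,
    Algebra.TensorProduct.productMap_left, Algebra.TensorProduct.productMap_right,
    lap_eq_slantLeft, lap_eq_slantLeft]

lemma rap_conv
    (hΔ₂ : comul.lTensor H R = LinearMap.lTensor H incl₂ R * LinearMap.lTensor H incl₁ R)
    (η ν : H →ₐ[k] k) :
    rap (conv η.toLinearMap ν.toLinearMap) R = rap ν.toLinearMap R * rap η.toLinearMap R := by
  rw [rap_conv_eq_slantRight, hΔ₂, map_mul, slantRight_lTensor, slantRight_lTensor,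
    Algebra.TensorProduct.productMap_left, Algebra.TensorProduct.productMap_right,
    rap_eq_slantRight, rap_eq_slantRight]

lemma rap_comul_mul_lap (hflip : ∀ h : H, TensorProduct.comm k H H (comul h) * R = R * comul h)
    (η : H →ₐ[k] k) (h : H) :
    rap η.toLinearMap (comul h) * lap η.toLinearMap R =
      lap η.toLinearMap R * lap η.toLinearMap (comul h) := by
  have := congrArg (slantLeft η) (hflip h)
  rwa [map_mul, map_mul, slantLeft_comm, ← rap_eq_slantRight, ← lap_eq_slantLeft,
    ← lap_eq_slantLeft] at this

lemma lap_comul_mul_rap (hflip : ∀ h : H, TensorProduct.comm k H H (comul h) * R = R * comul h)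
    (η : H →ₐ[k] k) (h : H) :
    lap η.toLinearMap (comul h) * rap η.toLinearMap R =
      rap η.toLinearMap R * rap η.toLinearMap (comul h) := by
  have := congrArg (slantRight η) (hflip h)
  rwa [map_mul, map_mul, slantRight_comm, ← lap_eq_slantLeft, ← rap_eq_slantRight,
    ← rap_eq_slantRight] at this

lemma commute_lap_mul_rap (hflip : ∀ h : H, TensorProduct.comm k H H (comul h) * R = R * comul h)
    (η : H →ₐ[k] k) (x : H) :
    Commute (lap η.toLinearMap R * rap η.toLinearMap R) x := by
  obtain ⟨h, rfl⟩ := rap_comul_surjective η x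
  calc lap η.toLinearMap R * rap η.toLinearMap R * rap η.toLinearMap (comul h)
      = lap η.toLinearMap R * (lap η.toLinearMap (comul h) * rap η.toLinearMap R) := by
        rw [mul_assoc, lap_comul_mul_rap hflip]
    _ = rap η.toLinearMap (comul h) * (lap η.toLinearMap R * rap η.toLinearMap R) := by
        rw [← mul_assoc, ← rap_comul_mul_lap hflip, mul_assoc]

lemma lap_mul_rap_conv
    (hΔ₁ : comul.rTensor H R = LinearMap.rTensor H incl₁ R * LinearMap.rTensor H incl₂ R)
    (hΔ₂ : comul.lTensor H R = LinearMap.lTensor H incl₂ R * LinearMap.lTensor H incl₁ R)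
    (hflip : ∀ h : H, TensorProduct.comm k H H (comul h) * R = R * comul h)
    (η ν : H →ₐ[k] k) :
    lap (conv η.toLinearMap ν.toLinearMap) R * rap (conv η.toLinearMap ν.toLinearMap) R =
      (lap η.toLinearMap R * rap η.toLinearMap R) * (lap ν.toLinearMap R * rap ν.toLinearMap R) := by
  rw [lap_conv hΔ₁, rap_conv hΔ₂, mul_assoc, ← mul_assoc (lap ν.toLinearMap R),
    (commute_lap_mul_rap hflip ν _).eq, ← mul_assoc]

end Quasitriangular

theorem central_grouplike_hom_general
    (R U : H ⊗[k] H) (hUR : U * R = 1)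
    (hqt4 : ∀ h : H, (TensorProduct.comm k H H) (Coalgebra.comul (R := k) h) =
      R * (Coalgebra.comul (R := k) h) * U)
    (hqt1 : (Coalgebra.comul (R := k)).rTensor H R =
      (((Algebra.TensorProduct.includeLeft : H →ₐ[k] (H ⊗[k] H))).toLinearMap.rTensor H R) *
      (((Algebra.TensorProduct.includeRight : H →ₐ[k] (H ⊗[k] H))).toLinearMap.rTensor H R))
    (hqt2 : (Coalgebra.comul (R := k)).lTensor H R =
      (LinearMap.lTensor H ((Algebra.TensorProduct.includeRight : H →ₐ[k] (H ⊗[k] H))).toLinearMap R) *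
      (LinearMap.lTensor H ((Algebra.TensorProduct.includeLeft : H →ₐ[k] (H ⊗[k] H))).toLinearMap R))
    (hqt3l : lap (Coalgebra.counit (R := k)) R = 1)
    (hqt3r : rap (Coalgebra.counit (R := k)) R = 1) :
    ∀ η ν : H →ₐ[k] k,
      (lap η.toLinearMap R * rap η.toLinearMap R ≠ 0) ∧
      (Coalgebra.comul (R := k) (lap η.toLinearMap R * rap η.toLinearMap R) =
        (lap η.toLinearMap R * rap η.toLinearMap R) ⊗ₜ[k]
          (lap η.toLinearMap R * rap η.toLinearMap R)) ∧
      (∀ x : H, (lap η.toLinearMap R * rap η.toLinearMap R) * x =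
        x * (lap η.toLinearMap R * rap η.toLinearMap R)) ∧
      (lap (conv η.toLinearMap ν.toLinearMap) R * rap (conv η.toLinearMap ν.toLinearMap) R =
        (lap η.toLinearMap R * rap η.toLinearMap R) *
          (lap ν.toLinearMap R * rap ν.toLinearMap R)) := by
  intro η ν
  have hflip (h : H) : TensorProduct.comm k H H (comul h) * R = R * comul h := by
    rw [hqt4, mul_assoc, hUR, mul_one]
  have hc := (isGroupLikeElem_lap hqt2 hqt3r η).mul (isGroupLikeElem_rap hqt1 hqt3l η)
  exact ⟨hc.ne_zero, hc.comul_eq_tmul_self, fun x ↦ (commute_lap_mul_rap hflip η x).eq,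
    lap_mul_rap_conv hqt1 hqt2 hflip η ν⟩

/-- In a quasitriangular Hopf algebra, for an algebra map $η : H → k$ the
element $c_η = a_η b_{η^{-1}} = η(r^1)r^2 · η(R^2)R^1$ is a central grouplike element, and
$η ↦ c_η$ is multiplicative: $c_{η*ν} = c_η c_ν$. -/
theorem central_grouplike_hom
    (Sinv : H →ₗ[k] H) (hSinv_l : ∀ h : H, Sinv (𝐒 h) = h)
    (hSinv_r : ∀ h : H, 𝐒 (Sinv h) = h)
    (R U : H ⊗[k] H) (hRU : R * U = 1) (hUR : U * R = 1)
    (hqt4 : ∀ h : H, (TensorProduct.comm k H H) (Coalgebra.comul (R := k) h) =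
      R * (Coalgebra.comul (R := k) h) * U)
    (hqt1 : (Coalgebra.comul (R := k)).rTensor H R =
      (((Algebra.TensorProduct.includeLeft : H →ₐ[k] (H ⊗[k] H))).toLinearMap.rTensor H R) *
      (((Algebra.TensorProduct.includeRight : H →ₐ[k] (H ⊗[k] H))).toLinearMap.rTensor H R))
    (hqt2 : (Coalgebra.comul (R := k)).lTensor H R =
      (LinearMap.lTensor H ((Algebra.TensorProduct.includeRight : H →ₐ[k] (H ⊗[k] H))).toLinearMap R) *
      (LinearMap.lTensor H ((Algebra.TensorProduct.includeLeft : H →ₐ[k] (H ⊗[k] H))).toLinearMap R))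
    (hqt3l : lap (Coalgebra.counit (R := k)) R = 1)
    (hqt3r : rap (Coalgebra.counit (R := k)) R = 1)
    (u' : H) (hu_r : uElt R * u' = 1) (hu_l : u' * uElt R = 1)
    (hS2u : ∀ h : H, 𝐒 (𝐒 h) = uElt R * h * u') :
    ∀ η ν : H →ₐ[k] k,
      (lap η.toLinearMap R * rap η.toLinearMap R ≠ 0) ∧
      (Coalgebra.comul (R := k) (lap η.toLinearMap R * rap η.toLinearMap R) =
        (lap η.toLinearMap R * rap η.toLinearMap R) ⊗ₜ[k]
          (lap η.toLinearMap R * rap η.toLinearMap R)) ∧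
      (∀ x : H, (lap η.toLinearMap R * rap η.toLinearMap R) * x =
        x * (lap η.toLinearMap R * rap η.toLinearMap R)) ∧
      (lap (conv η.toLinearMap ν.toLinearMap) R * rap (conv η.toLinearMap ν.toLinearMap) R =
        (lap η.toLinearMap R * rap η.toLinearMap R) *
          (lap ν.toLinearMap R * rap ν.toLinearMap R)) :=
  central_grouplike_hom_general R U hUR hqt4 hqt1 hqt2 hqt3l hqt3r
end

section
/- If ω ∈ H* is convolution invertible with ω(1) = 1 and S²(h) = ω(h₁)h₂ω⁻¹(h₃) for all h ∈ H (i.e. S² is co-inner, induced by ω), then ω⁻¹(a⁻¹) = α(a⁻¹). -/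
open TensorProduct Coalgebra HopfAlgebra

variable {k H : Type*} [Field k] [Ring H] [HopfAlgebra k H]

/-- The antipode of `H`, as a linear map. -/
local notation "𝐒" => HopfAlgebra.antipode (R := k)

/-!
Apply `λ` to `S²h = ω(h₁) h₂ ω⁻¹(h₃)`. Since `λ` is a left integral, `ω * λ = ω(1) λ = λ`,
and then `λ(h₁) h₂ = λ(h) a⁻¹` turns the right-hand side into `λ(h) ω⁻¹(a⁻¹)`. On the other
hand `λ(S²h) = λ(a h a⁻¹) = λ(χ(a⁻¹) a h) = α(a⁻¹) λ(h)`, since `χ` scales the grouplike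
`a⁻¹ = S⁻²(a⁻¹)` by `α(a⁻¹)`. Comparing the two at any `h` with `λ(h) ≠ 0` gives the claim.
-/

lemma isGroupLikeElem_of_comul_eq_tmul_self {K A : Type*} [Field K] [AddCommGroup A] [Module K A]
    [Coalgebra K A] {a : A} (ha : a ≠ 0) (hcomul : comul (R := K) a = a ⊗ₜ[K] a) :
    IsGroupLikeElem K a := by
  refine ⟨?_, hcomul⟩
  have h := Coalgebra.rTensor_counit_comul (R := K) a
  rw [hcomul, LinearMap.rTensor_tmul] at h
  have h' : (counit (R := K) a - 1) • a = 0 := by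
    simpa [sub_smul, sub_eq_zero] using congrArg (TensorProduct.lid K A) h
  exact sub_eq_zero.mp ((smul_eq_zero.mp h').resolve_right ha)

lemma comp_lT_eq_conv (f g : H →ₗ[k] k) : g ∘ₗ lT f = conv f g := by
  have : g ∘ₗ (TensorProduct.lid k H).toLinearMap ∘ₗ f.rTensor H
      = LinearMap.mul' k k ∘ₗ TensorProduct.map f g := by
    ext x y
    simp
  simp only [lT, conv, ← LinearMap.comp_assoc, this]

lemma sw3_id (f p : H →ₗ[k] k) :
    sw3 f LinearMap.id p
      = (TensorProduct.rid k H).toLinearMap ∘ₗ TensorProduct.map (lT f) p ∘ₗ comul := by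
  have : (TensorProduct.lid k H).toLinearMap ∘ₗ (TensorProduct.rid k (k ⊗[k] H)).toLinearMap
        ∘ₗ TensorProduct.map (TensorProduct.map f LinearMap.id) p ∘ₗ comul.rTensor H
      = (TensorProduct.rid k H).toLinearMap ∘ₗ TensorProduct.map (lT f) p := by
    ext x y
    simp [lT, LinearMap.rTensor]
  simp only [sw3, lT, ← LinearMap.comp_assoc] at this ⊢
  rw [this]

lemma apply_sw3_id (f g p : H →ₗ[k] k) (h : H) :
    g (sw3 f LinearMap.id p h) = p (lT (g ∘ₗ lT f) h) := by
  have : g ∘ₗ (TensorProduct.rid k H).toLinearMap ∘ₗ TensorProduct.map (lT f) p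
      = p ∘ₗ (TensorProduct.lid k H).toLinearMap ∘ₗ (g ∘ₗ lT f).rTensor H := by
    ext x y
    simp [mul_comm]
  simpa only [sw3_id, lT, LinearMap.comp_apply] using LinearMap.congr_fun this (comul h)

lemma apply_sw3_id_of_conv_eq_of_lT_eq {lam ω ωi : H →ₗ[k] k} {b : H}
    (hconv : conv ω lam = lam) (hmod : ∀ h : H, lT lam h = lam h • b) (h : H) :
    lam (sw3 ω LinearMap.id ωi h) = lam h * ωi b := by
  rw [apply_sw3_id, comp_lT_eq_conv, hconv, hmod, map_smul, smul_eq_mul]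

lemma chiMap_of_comul_eq_tmul_self (Sinv : H →ₗ[k] H) (f : H →ₗ[k] k) {b : H}
    (hb : comul (R := k) b = b ⊗ₜ[k] b) : chiMap Sinv f b = f b • Sinv (Sinv b) := by
  simp [chiMap, hb]

lemma apply_mul_mul_antipode_of_isGroupLikeElem {lam f : H →ₗ[k] k} {Sinv : H →ₗ[k] H}
    (hSinv : ∀ h : H, Sinv (𝐒 h) = h) (hf : ∀ h l : H, lam (l * h) = lam (chiMap Sinv f h * l))
    {a : H} (ha : IsGroupLikeElem k a) (h : H) :
    lam (a * h * 𝐒 a) = f (𝐒 a) * lam h := by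
  have hSinv_Sa : Sinv (Sinv (𝐒 a)) = 𝐒 a := by
    rw [hSinv, ← hSinv (𝐒 a), ha.antipode_antipode]
  rw [hf, chiMap_of_comul_eq_tmul_self Sinv f ha.antipode.comul_eq_tmul_self, hSinv_Sa,
    smul_mul_assoc, ← mul_assoc, ha.antipode_mul_cancel, one_mul, map_smul, smul_eq_mul]

theorem omega_inv_modular_value_general
    (lam : H →ₗ[k] k) (hlam_ne : lam ≠ 0)
    (hlam_int : ∀ f : H →ₗ[k] k, conv f lam = f 1 • lam)
    (a : H) (ha_ne : a ≠ 0) (ha_grp : Coalgebra.comul (R := k) a = a ⊗ₜ[k] a)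
    (ha_mod : ∀ h : H, lT lam h = lam h • (𝐒 a))
    (ha_S2 : ∀ h : H, lam (𝐒 (𝐒 h)) = lam (a * h * 𝐒 a))
    (Sinv : H →ₗ[k] H) (hSinv_l : ∀ h : H, Sinv (𝐒 h) = h)
    (α : H →ₐ[k] k)
    (hα : ∀ h l : H, lam (l * h) = lam ((chiMap Sinv α.toLinearMap h) * l))
    (ω ωi : H →ₗ[k] k)
    (hω1 : ω 1 = 1)
    (hS2ω : ∀ h : H, 𝐒 (𝐒 h) = sw3 ω LinearMap.id ωi h) :
    ωi (𝐒 a) = α (𝐒 a) := by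
  have ha : IsGroupLikeElem k a := isGroupLikeElem_of_comul_eq_tmul_self ha_ne ha_grp
  have hconv : conv ω lam = lam := by rw [hlam_int, hω1, one_smul]
  obtain ⟨h₀, hh₀⟩ : ∃ h : H, lam h ≠ 0 := by
    by_contra! hzero
    exact hlam_ne (LinearMap.ext hzero)
  refine mul_left_cancel₀ hh₀ ?_
  calc lam h₀ * ωi (𝐒 a) = lam (𝐒 (𝐒 h₀)) := by
        rw [hS2ω, apply_sw3_id_of_conv_eq_of_lT_eq hconv ha_mod]
    _ = lam (a * h₀ * 𝐒 a) := ha_S2 h₀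
    _ = lam h₀ * α (𝐒 a) := by
        rw [apply_mul_mul_antipode_of_isGroupLikeElem hSinv_l hα ha, AlgHom.toLinearMap_apply,
          mul_comm]

/-- If $S^2$ is co-inner, induced by a convolution invertible $ω$ with
$ω(1) = 1$, then $ω^{-1}(a^{-1}) = α(a^{-1})$. -/
theorem omega_inv_modular_value
    (lam : H →ₗ[k] k) (hlam_ne : lam ≠ 0)
    (hlam_int : ∀ f : H →ₗ[k] k, conv f lam = f 1 • lam)
    (a : H) (ha_ne : a ≠ 0) (ha_grp : Coalgebra.comul (R := k) a = a ⊗ₜ[k] a)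
    (ha_mod : ∀ h : H, lT lam h = lam h • (𝐒 a))
    (ha_S2 : ∀ h : H, lam (𝐒 (𝐒 h)) = lam (a * h * 𝐒 a))
    (Sinv : H →ₗ[k] H) (hSinv_l : ∀ h : H, Sinv (𝐒 h) = h)
    (hSinv_r : ∀ h : H, 𝐒 (Sinv h) = h)
    (α : H →ₐ[k] k)
    (hα : ∀ h l : H, lam (l * h) = lam ((chiMap Sinv α.toLinearMap h) * l))
    (ω ωi : H →ₗ[k] k)
    (hω_r : conv ω ωi = Coalgebra.counit (R := k))
    (hω_l : conv ωi ω = Coalgebra.counit (R := k))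
    (hω1 : ω 1 = 1)
    (hS2ω : ∀ h : H, 𝐒 (𝐒 h) = sw3 ω LinearMap.id ωi h) :
    ωi (𝐒 a) = α (𝐒 a) :=
  omega_inv_modular_value_general lam hlam_ne hlam_int a ha_ne ha_grp ha_mod ha_S2 Sinv hSinv_l α hα
    ω ωi hω1 hS2ω
end
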